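/- arXiv:2308.14631 — 3 statements merged into one kernel-verified Lean document; each statement's English description precedes it below -/
import Mathlib

section
/- Suppose A₁,…,Aₙ are real 2×2 matrices that commute pairwise and satisfy A₁ᵀA₁ + ⋯ + AₙᵀAₙ = R·I₂ for some R > 0. Then either all Aᵢ are symmetric (Aᵢ = [[aᵢ, bᵢ],[bᵢ, dᵢ]]), or all Aᵢ are of the rotation-scaling form Aᵢ = [[aᵢ, -bᵢ],[bᵢ, aᵢ]]. -/
/-!
Identify `ℝ²` with `ℂ`. A real `2 × 2` matrix `M` then acts as `v ↦ (p v + q v̄) / 2`, where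
`p = conformalPart M` and `q = anticonformalPart M`; `M` is symmetric iff `p` is real, and of
rotation-scaling form iff `q = 0`. Commuting matrices have proportional traceless parts, so
`(Im pᵢ) qⱼ = (Im pⱼ) qᵢ`, and the anticonformal part of `Mᵀ M` is `p̄ q`, so the hypothesis on
`∑ Aᵢᵀ Aᵢ` says `∑ p̄ᵢ qᵢ = 0`. If some `Im pₖ ≠ 0`, then `qᵢ = (Im pᵢ / Im pₖ) qₖ` and
`0 = qₖ ∑ p̄ᵢ Im pᵢ`, whose last factor has imaginary part `-∑ (Im pᵢ)² < 0`; hence every `qᵢ = 0`.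
-/

open Matrix ComplexConjugate

namespace Matrix

variable (M N : Matrix (Fin 2) (Fin 2) ℝ)

def conformalPart : ℂ := ⟨M 0 0 + M 1 1, M 1 0 - M 0 1⟩

def anticonformalPart : ℂ := ⟨M 0 0 - M 1 1, M 0 1 + M 1 0⟩

theorem transpose_eq_self_of_im_conformalPart_eq_zero (h : (conformalPart M).im = 0) :
    Mᵀ = M := by
  simp only [conformalPart, sub_eq_zero] at h
  ext i j
  fin_cases i <;> fin_cases j <;> simp [h]

theorem eq_rotationScaling_of_anticonformalPart_eq_zero (h : anticonformalPart M = 0) :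
    M 0 0 = M 1 1 ∧ M 0 1 = -M 1 0 := by
  simp only [anticonformalPart, Complex.ext_iff, Complex.zero_re, Complex.zero_im] at h
  exact ⟨by linarith [h.1], by linarith [h.2]⟩

theorem anticonformalPart_sum {ι : Type*} (s : Finset ι) (f : ι → Matrix (Fin 2) (Fin 2) ℝ) :
    anticonformalPart (∑ i ∈ s, f i) = ∑ i ∈ s, anticonformalPart (f i) := by
  apply Complex.ext <;>
    simp [anticonformalPart, Complex.re_sum, Complex.im_sum, Matrix.sum_apply,
      Finset.sum_add_distrib, Finset.sum_sub_distrib]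

theorem anticonformalPart_smul_one (r : ℝ) : anticonformalPart (r • 1) = 0 := by
  apply Complex.ext <;> simp [anticonformalPart]

theorem anticonformalPart_transpose_mul_self :
    anticonformalPart (Mᵀ * M) = conj (conformalPart M) * anticonformalPart M := by
  apply Complex.ext <;>
    simp only [anticonformalPart, conformalPart, mul_apply, transpose_apply, Fin.sum_univ_two,
      Complex.mul_re, Complex.mul_im, Complex.conj_re, Complex.conj_im] <;> ring

theorem im_conformalPart_mul_anticonformalPart_of_commute (h : M * N = N * M) :
    ((conformalPart M).im : ℂ) * anticonformalPart N
      = (conformalPart N).im * anticonformalPart M := by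
  have entry (i j : Fin 2) := congrFun (congrFun h i) j
  simp only [Matrix.mul_apply, Fin.sum_univ_two] at entry
  apply Complex.ext <;>
    simp only [conformalPart, anticonformalPart, Complex.mul_re, Complex.mul_im,
      Complex.ofReal_re, Complex.ofReal_im, zero_mul, sub_zero, add_zero]
  · linear_combination entry 0 1 + entry 1 0
  · linear_combination -2 * entry 0 0

end Matrix

theorem eq_zero_of_im_mul_eq_of_sum_conj_mul_eq_zero {ι : Type*} [Fintype ι] (z w : ι → ℂ)
    (k : ι) (hk : (z k).im ≠ 0) (hprop : ∀ i, ((z k).im : ℂ) * w i = (z i).im * w k)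
    (hsum : ∑ i, conj (z i) * w i = 0) (i : ι) : w i = 0 := by
  have hwk_mul : w k * ∑ i, conj (z i) * (z i).im = 0 := by
    calc w k * ∑ i, conj (z i) * (z i).im
        = ∑ i, conj (z i) * ((z i).im * w k) := by
          rw [Finset.mul_sum]; exact Finset.sum_congr rfl fun _ _ => by ring
      _ = (z k).im * ∑ i, conj (z i) * w i := by
          rw [Finset.mul_sum]; exact Finset.sum_congr rfl fun i _ => by rw [← hprop]; ring
      _ = 0 := by rw [hsum, mul_zero]
  have hne : ∑ i, conj (z i) * (z i).im ≠ 0 := by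
    have him : (∑ i, conj (z i) * (z i).im).im = -∑ i, (z i).im ^ 2 := by
      simp [Complex.im_sum, sq]
    have hpos : 0 < ∑ i, (z i).im ^ 2 :=
      (sq_pos_of_ne_zero hk).trans_le
        (Finset.single_le_sum (fun i _ => sq_nonneg (z i).im) (Finset.mem_univ k))
    intro h0
    rw [h0, Complex.zero_im] at him
    linarith
  have hwk : w k = 0 := (mul_eq_zero.1 hwk_mul).resolve_right hne
  have := hprop i
  rw [hwk, mul_zero] at this
  exact (mul_eq_zero.1 this).resolve_left (by exact_mod_cast hk)

theorem stmt_2_general (n : ℕ) (A : Fin n → Matrix (Fin 2) (Fin 2) ℝ)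
    (hcomm : ∀ i j, A i * A j = A j * A i) (R : ℝ)
    (hsum : ∑ i, (A i)ᵀ * A i = R • (1 : Matrix (Fin 2) (Fin 2) ℝ)) :
    (∀ i, (A i)ᵀ = A i) ∨ (∀ i, A i 0 0 = A i 1 1 ∧ A i 0 1 = - A i 1 0) := by
  by_cases hsym : ∀ i, (conformalPart (A i)).im = 0
  · exact Or.inl fun i => transpose_eq_self_of_im_conformalPart_eq_zero _ (hsym i)
  push Not at hsym
  obtain ⟨k, hk⟩ := hsym
  have hconj : ∑ i, conj (conformalPart (A i)) * anticonformalPart (A i) = 0 := by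
    simpa [anticonformalPart_sum, anticonformalPart_transpose_mul_self,
      anticonformalPart_smul_one] using congrArg anticonformalPart hsum
  exact Or.inr fun i => eq_rotationScaling_of_anticonformalPart_eq_zero _ <|
    eq_zero_of_im_mul_eq_of_sum_conj_mul_eq_zero _ _ k hk
      (fun j => im_conformalPart_mul_anticonformalPart_of_commute _ _ (hcomm k j)) hconj i

theorem stmt_2 (n : ℕ) (A : Fin n → Matrix (Fin 2) (Fin 2) ℝ)
    (hcomm : ∀ i j, A i * A j = A j * A i) (R : ℝ) (hR : 0 < R)
    (hsum : ∑ i, (A i)ᵀ * A i = R • (1 : Matrix (Fin 2) (Fin 2) ℝ)) :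
    (∀ i, (A i)ᵀ = A i) ∨ (∀ i, A i 0 0 = A i 1 1 ∧ A i 0 1 = - A i 1 0) :=
  stmt_2_general n A hcomm R hsum
end

section
/- Let a₁,…,aₙ, b₁,…,bₙ, c₁,…,cₙ, d₁,…,dₙ be real numbers with not all cᵢ zero. Suppose bᵢ = t cᵢ and aᵢ = s cᵢ + dᵢ for all i (for some reals s, t), and suppose Σ(aᵢ² + bᵢ²) = Σ(cᵢ² + dᵢ²) = R and Σ(aᵢcᵢ + bᵢdᵢ) = 0. Then (1 - t)·(s·Σcᵢdᵢ − (1+t)·Σcᵢ²) = 0. -/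
/-! Substituting `a = s c + d` and `b = t c`, the conclusion is termwise the combination
`(a² + b²) - (c² + d²) - s (a c + b d)`, so it is `R - R - s · 0`. -/

open Finset

theorem sum_sq_add_sq_sub_sum_sq_add_sq_sub_mul_sum_mul_add_mul {ι R : Type*} [CommRing R]
    (I : Finset ι) (a b c d : ι → R) (s t : R)
    (hb : ∀ i, b i = t * c i) (ha : ∀ i, a i = s * c i + d i) :
    ∑ i ∈ I, (a i ^ 2 + b i ^ 2) - ∑ i ∈ I, (c i ^ 2 + d i ^ 2)
        - s * ∑ i ∈ I, (a i * c i + b i * d i)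
      = (1 - t) * (s * ∑ i ∈ I, c i * d i - (1 + t) * ∑ i ∈ I, c i ^ 2) := by
  simp only [ha, hb, mul_sum, ← sum_sub_distrib]
  exact sum_congr rfl fun i _ => by ring

theorem stmt_11_general (n : ℕ) (a b c d : Fin n → ℝ) (s t R : ℝ)
    (hb : ∀ i, b i = t * c i) (ha : ∀ i, a i = s * c i + d i)
    (h1 : ∑ i, (a i ^ 2 + b i ^ 2) = R)
    (h2 : ∑ i, (c i ^ 2 + d i ^ 2) = R)
    (h3 : ∑ i, (a i * c i + b i * d i) = 0) :
    (1 - t) * (s * ∑ i, c i * d i - (1 + t) * ∑ i, c i ^ 2) = 0 := by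
  rw [← sum_sq_add_sq_sub_sum_sq_add_sq_sub_mul_sum_mul_add_mul univ a b c d s t hb ha,
    h1, h2, h3]
  ring

theorem stmt_11 (n : ℕ) (a b c d : Fin n → ℝ) (s t R : ℝ) (hR : 0 < R)
    (hc : ∃ i, c i ≠ 0)
    (hb : ∀ i, b i = t * c i) (ha : ∀ i, a i = s * c i + d i)
    (h1 : ∑ i, (a i ^ 2 + b i ^ 2) = R)
    (h2 : ∑ i, (c i ^ 2 + d i ^ 2) = R)
    (h3 : ∑ i, (a i * c i + b i * d i) = 0) :
    (1 - t) * (s * ∑ i, c i * d i - (1 + t) * ∑ i, c i ^ 2) = 0 :=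
  stmt_11_general n a b c d s t R hb ha h1 h2 h3
end

section
/- Let (a_α)_{|α| ≤ r} be vectors in ℝ² indexed by multi-indices α ∈ ℕⁿ with |α| ≤ r, and define y_{β,γ} = a_βᵀ a_γ. Suppose the sphere relation Σ_{i=1}^n y_{β+eᵢ, γ+eᵢ} = R·y_{β,γ} holds for all |β|,|γ| ≤ r−1, with R > 0. Then for any real coefficients (w_α)_{|α| ≤ r−1}: Σ_{i=1}^n ‖Σ_α w_α a_{α+eᵢ}‖² = R·‖Σ_α w_α a_α‖². In particular, if Σ_α w_α a_α = 0 then Σ_α w_α a_{α+eᵢ} = 0 for every i. -/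
/-!
Expanding both squared norms bilinearly turns the identity into the weighted double sum
`∑ β γ, w β w γ (∑ i y_{β+eᵢ,γ+eᵢ} - R y_{β,γ})`, each term of which vanishes by the sphere
relation. The second claim follows because a sum of squares vanishes only termwise.
-/

open Finset

section

variable {E ι : Type*} [NormedAddCommGroup E]

theorem eq_zero_of_sum_norm_sq_eq_zero {κ : Type*} [Fintype κ] {x : κ → E}
    (h : ∑ i, ‖x i‖ ^ 2 = 0) (i : κ) : x i = 0 := by
  have hi := (sum_eq_zero_iff_of_nonneg fun j _ => sq_nonneg ‖x j‖).mp h i (mem_univ i)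
  exact norm_eq_zero.mp (pow_eq_zero_iff two_ne_zero |>.mp hi)

variable [InnerProductSpace ℝ E]

theorem norm_sum_smul_sq (S : Finset ι) (w : ι → ℝ) (v : ι → E) :
    ‖∑ α ∈ S, w α • v α‖ ^ 2 = ∑ β ∈ S, ∑ γ ∈ S, w β * w γ * inner ℝ (v β) (v γ) := by
  rw [← real_inner_self_eq_norm_sq]
  simp only [sum_inner, inner_sum, real_inner_smul_left, real_inner_smul_right, mul_assoc]
  exact sum_congr rfl fun β _ => sum_congr rfl fun γ _ => by rw [real_inner_comm]

theorem sum_norm_sum_smul_sq_eq_of_inner {κ : Type*} [Fintype κ] (S : Finset ι) (w : ι → ℝ)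
    (a : ι → E) (b : κ → ι → E) (R : ℝ)
    (h : ∀ β ∈ S, ∀ γ ∈ S, ∑ i, inner ℝ (b i β) (b i γ) = R * inner ℝ (a β) (a γ)) :
    ∑ i, ‖∑ α ∈ S, w α • b i α‖ ^ 2 = R * ‖∑ α ∈ S, w α • a α‖ ^ 2 := by
  simp only [norm_sum_smul_sq, mul_sum]
  rw [sum_comm]
  refine sum_congr rfl fun β hβ => ?_
  rw [sum_comm]
  refine sum_congr rfl fun γ hγ => ?_
  rw [← mul_sum, h β hβ γ hγ]
  ring

end

theorem stmt_16_general (n r : ℕ) (a : (Fin n → ℕ) → EuclideanSpace ℝ (Fin 2)) (R : ℝ)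
    (hsphere : ∀ β γ : Fin n → ℕ, (∑ i, β i) ≤ r - 1 → (∑ i, γ i) ≤ r - 1 →
      ∑ i : Fin n,
          (inner ℝ (a (Function.update β i (β i + 1))) (a (Function.update γ i (γ i + 1))) : ℝ)
        = R * inner ℝ (a β) (a γ))
    (S : Finset (Fin n → ℕ)) (hS : ∀ α ∈ S, (∑ i, α i) ≤ r - 1)
    (w : (Fin n → ℕ) → ℝ) :
    (∑ i : Fin n, ‖∑ α ∈ S, w α • a (Function.update α i (α i + 1))‖ ^ 2
        = R * ‖∑ α ∈ S, w α • a α‖ ^ 2)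
    ∧ ((∑ α ∈ S, w α • a α) = 0 →
        ∀ i, (∑ α ∈ S, w α • a (Function.update α i (α i + 1))) = 0) := by
  have hnorm := sum_norm_sum_smul_sq_eq_of_inner S w a
    (fun i α => a (Function.update α i (α i + 1))) R
    fun β hβ γ hγ => hsphere β γ (hS β hβ) (hS γ hγ)
  refine ⟨hnorm, fun h0 => eq_zero_of_sum_norm_sq_eq_zero ?_⟩
  rw [hnorm, h0, norm_zero]
  ring

theorem stmt_16 (n r : ℕ) (a : (Fin n → ℕ) → EuclideanSpace ℝ (Fin 2)) (R : ℝ) (hR : 0 < R)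
    (hsphere : ∀ β γ : Fin n → ℕ, (∑ i, β i) ≤ r - 1 → (∑ i, γ i) ≤ r - 1 →
      ∑ i : Fin n,
          (inner ℝ (a (Function.update β i (β i + 1))) (a (Function.update γ i (γ i + 1))) : ℝ)
        = R * inner ℝ (a β) (a γ))
    (S : Finset (Fin n → ℕ)) (hS : ∀ α ∈ S, (∑ i, α i) ≤ r - 1)
    (w : (Fin n → ℕ) → ℝ) :
    (∑ i : Fin n, ‖∑ α ∈ S, w α • a (Function.update α i (α i + 1))‖ ^ 2
        = R * ‖∑ α ∈ S, w α • a α‖ ^ 2)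
    ∧ ((∑ α ∈ S, w α • a α) = 0 →
        ∀ i, (∑ α ∈ S, w α • a (Function.update α i (α i + 1))) = 0) :=
  stmt_16_general n r a R hsphere S hS w
end
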